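/- arXiv:1801.07423 — 3 statements merged into one kernel-verified Lean document; each statement's English description precedes it below -/
import Mathlib

section
/- Let m > 0 and Ω > 0, and let f(x) = (Ω/m)^(−m) · x^(m−1) · exp(−m·x/Ω) / Γ(m) be the probability density function of a Gamma random variable with shape m and scale Ω/m. Let μ > 0, θ ∈ ℝ, ϑ = θ + √(π/2)/μ and ϱ = θ − √(π/2)/μ, and assume ϱ ≥ 0. Then ∫₀^ϱ f(x) dx + ∫_ϱ^ϑ (1/2 − (μ/√(2π))·(x − θ)) · f(x) dx = (μ/√(2π)) · [ θ·( Q(m, mϱ/Ω) − Q(m, mϑ/Ω) ) + Ω·( Q(1+m, mϑ/Ω) − Q(1+m, mϱ/Ω) ) ] + (1/2)·( P(m, mϑ/Ω) + P(m, mϱ/Ω) ), where P(s,x) = (∫₀^x t^(s−1) e^(−t) dt)/Γ(s) is the regularized lower incomplete gamma function and Q(s,x) = (∫_x^∞ t^(s−1) e^(−t) dt)/Γ(s) is the regularized upper incomplete gamma function. -/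
open MeasureTheory Real

/-- The regularized lower incomplete gamma function
`P(s,x) = (∫₀^x t^(s-1) e^(-t) dt) / Γ(s)`. -/
noncomputable def regGammaP (s x : ℝ) : ℝ :=
  (∫ t in (0:ℝ)..x, t ^ (s - 1) * Real.exp (-t)) / Real.Gamma s

/-- The regularized upper incomplete gamma function
`Q(s,x) = (∫_x^∞ t^(s-1) e^(-t) dt) / Γ(s)`. -/
noncomputable def regGammaQ (s x : ℝ) : ℝ :=
  (∫ t in Set.Ioi x, t ^ (s - 1) * Real.exp (-t)) / Real.Gamma s

private lemma gamma_integrand_ii {s c a b : ℝ} (hs : 0 < s) (hc : 0 ≤ c)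
    (ha : 0 ≤ a) (hb : 0 ≤ b) :
    IntervalIntegrable (fun x : ℝ => x ^ (s - 1) * Real.exp (-(c * x))) volume a b := by
  have hr : IntervalIntegrable (fun x : ℝ => x ^ (s - 1)) volume a b :=
    intervalIntegral.intervalIntegrable_rpow' (by linarith)
  rw [intervalIntegrable_iff] at hr ⊢
  refine Integrable.mono hr ?_ ?_
  · apply Measurable.aestronglyMeasurable
    fun_prop
  · filter_upwards [ae_restrict_mem measurableSet_uIoc] with x hx
    have hx0 : 0 < x := lt_of_le_of_lt (le_min ha hb) hx.1
    rw [Real.norm_eq_abs, Real.norm_eq_abs, abs_mul, abs_of_pos (Real.exp_pos _)]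
    calc |x ^ (s - 1)| * Real.exp (-(c * x)) ≤ |x ^ (s - 1)| * 1 := by
          gcongr
          rw [Real.exp_le_one_iff]
          nlinarith
      _ = |x ^ (s - 1)| := mul_one _

private lemma gamma_integrand_ii' {s a b : ℝ} (hs : 0 < s) (ha : 0 ≤ a) (hb : 0 ≤ b) :
    IntervalIntegrable (fun t : ℝ => t ^ (s - 1) * Real.exp (-t)) volume a b := by
  simpa using gamma_integrand_ii (c := 1) hs zero_le_one ha hb

private lemma gamma_integrand_subst {s c : ℝ} (a b : ℝ) (hc : 0 < c)
    (ha : 0 ≤ a) (hb : 0 ≤ b) :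
    (∫ x in a..b, x ^ (s - 1) * Real.exp (-(c * x)))
      = c ^ (-s) * ∫ t in c * a..c * b, t ^ (s - 1) * Real.exp (-t) := by
  have h1 := intervalIntegral.integral_comp_mul_left
      (a := a) (b := b) (fun t => t ^ (s - 1) * Real.exp (-t)) hc.ne'
  have h2 : (∫ x in a..b, x ^ (s - 1) * Real.exp (-(c * x)))
      = c ^ (1 - s) * ∫ x in a..b, (c * x) ^ (s - 1) * Real.exp (-(c * x)) := by
    rw [← intervalIntegral.integral_const_mul]
    refine intervalIntegral.integral_congr fun x hx => ?_
    have hx0 : 0 ≤ x := le_trans (le_min ha hb) hx.1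
    rw [Real.mul_rpow hc.le hx0, ← mul_assoc, ← mul_assoc, ← Real.rpow_add hc]
    norm_num
  rw [h2, h1, smul_eq_mul, ← mul_assoc, ← Real.rpow_neg_one c, ← Real.rpow_add hc]
  congr 1
  ring

private lemma regGammaQ_sub {s a b : ℝ} (hs : 0 < s) (ha : 0 ≤ a) (hab : a ≤ b) :
    regGammaQ s a - regGammaQ s b
      = (∫ t in a..b, t ^ (s - 1) * Real.exp (-t)) / Real.Gamma s := by
  have hint : IntegrableOn (fun t : ℝ => t ^ (s - 1) * Real.exp (-t)) (Set.Ioi 0) :=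
    (Real.GammaIntegral_convergent hs).congr_fun (fun x _ => mul_comm _ _) measurableSet_Ioi
  have h2 : IntegrableOn (fun t : ℝ => t ^ (s - 1) * Real.exp (-t)) (Set.Ioc a b) :=
    hint.mono_set (fun x hx => lt_of_le_of_lt ha hx.1)
  have h1 : IntegrableOn (fun t : ℝ => t ^ (s - 1) * Real.exp (-t)) (Set.Ioi b) :=
    hint.mono_set (Set.Ioi_subset_Ioi (ha.trans hab))
  have hsplit : (∫ t in Set.Ioi a, t ^ (s - 1) * Real.exp (-t))
      = (∫ t in Set.Ioc a b, t ^ (s - 1) * Real.exp (-t))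
        + ∫ t in Set.Ioi b, t ^ (s - 1) * Real.exp (-t) := by
    rw [← setIntegral_union (Set.Ioc_disjoint_Ioi le_rfl) measurableSet_Ioi h2 h1,
        Set.Ioc_union_Ioi_eq_Ioi hab]
  unfold regGammaQ
  rw [intervalIntegral.integral_of_le hab, hsplit]
  ring

/-- Proposition 1: closed-form outage probability under Nakagami-m fading. -/
theorem outage_nakagami_closed_form
    (m Ω μ θ ϑ ϱ : ℝ) (hm : 0 < m) (hΩ : 0 < Ω) (hμ : 0 < μ)
    (hϑ : ϑ = θ + Real.sqrt (π / 2) / μ) (hϱ : ϱ = θ - Real.sqrt (π / 2) / μ)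
    (hϱ0 : 0 ≤ ϱ)
    (f : ℝ → ℝ)
    (hf : ∀ x, f x = (Ω / m) ^ (-m) * x ^ (m - 1) * Real.exp (-(m * x) / Ω) / Real.Gamma m) :
    (∫ x in (0:ℝ)..ϱ, f x)
      + (∫ x in ϱ..ϑ, (1 / 2 - μ / Real.sqrt (2 * π) * (x - θ)) * f x)
    = μ / Real.sqrt (2 * π) *
        (θ * (regGammaQ m (m * ϱ / Ω) - regGammaQ m (m * ϑ / Ω))
          + Ω * (regGammaQ (1 + m) (m * ϑ / Ω) - regGammaQ (1 + m) (m * ϱ / Ω)))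
      + 1 / 2 * (regGammaP m (m * ϑ / Ω) + regGammaP m (m * ϱ / Ω)) := by
  set k := μ / Real.sqrt (2 * π) with hk
  have hϱϑ : ϱ ≤ ϑ := by
    have h1 : 0 ≤ Real.sqrt (π / 2) / μ := div_nonneg (Real.sqrt_nonneg _) hμ.le
    rw [hϑ, hϱ]; linarith
  have hϑ0 : 0 ≤ ϑ := hϱ0.trans hϱϑ
  have hc : 0 < m / Ω := div_pos hm hΩ
  set c := m / Ω with hcc
  have hcϱ : 0 ≤ c * ϱ := mul_nonneg hc.le hϱ0
  have hcϑ : 0 ≤ c * ϑ := mul_nonneg hc.le hϑ0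
  have hcab : c * ϱ ≤ c * ϑ := mul_le_mul_of_nonneg_left hϱϑ hc.le
  have hΓ : 0 < Real.Gamma m := Real.Gamma_pos_of_pos hm
  have hΓ' : Real.Gamma (1 + m) = m * Real.Gamma m := by
    rw [add_comm]; exact Real.Gamma_add_one hm.ne'
  have hm1 : (0:ℝ) < 1 + m := by linarith
  -- rewrite the density in a convenient form
  have hf' : ∀ x : ℝ, f x = c ^ m / Real.Gamma m * (x ^ (m - 1) * Real.exp (-(c * x))) := by
    intro x
    rw [hf x]
    have h1 : (Ω / m) ^ (-m) = c ^ m := by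
      rw [Real.rpow_neg (div_pos hΩ hm).le, ← Real.inv_rpow (div_pos hΩ hm).le, inv_div]
    have h2 : -(m * x) / Ω = -(c * x) := by rw [hcc]; ring
    rw [h1, h2]; ring
  -- name the three reference integrals
  set J1 := ∫ t in (0:ℝ)..(c * ϱ), t ^ (m - 1) * Real.exp (-t) with hJ1
  set J2 := ∫ t in (c * ϱ)..(c * ϑ), t ^ (m - 1) * Real.exp (-t) with hJ2
  set J3 := ∫ t in (c * ϱ)..(c * ϑ), t ^ ((1 + m) - 1) * Real.exp (-t) with hJ3
  have hA : c ^ m * c ^ (-m) = 1 := by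
    rw [← Real.rpow_add hc]; simp
  have hB : c ^ m * c ^ (-(1 + m)) = Ω / m := by
    rw [← Real.rpow_add hc]
    have h : m + -(1 + m) = -1 := by ring
    rw [h, Real.rpow_neg_one, hcc, inv_div]
  -- first integral
  have e1 : (∫ x in (0:ℝ)..ϱ, f x) = J1 / Real.Gamma m := by
    simp_rw [hf']
    rw [intervalIntegral.integral_const_mul, gamma_integrand_subst 0 ϱ hc le_rfl hϱ0,
        mul_zero, ← hJ1]
    have h : c ^ m / Real.Gamma m * (c ^ (-m) * J1)
        = c ^ m * c ^ (-m) * (J1 / Real.Gamma m) := by ring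
    rw [h, hA, one_mul]
  -- second integral
  have hint1 : IntervalIntegrable (fun x : ℝ => x ^ (m - 1) * Real.exp (-(c * x))) volume ϱ ϑ :=
    gamma_integrand_ii hm hc.le hϱ0 hϑ0
  have hint2 : IntervalIntegrable (fun x : ℝ => x ^ ((1 + m) - 1) * Real.exp (-(c * x)))
      volume ϱ ϑ := gamma_integrand_ii hm1 hc.le hϱ0 hϑ0
  have e2 : (∫ x in ϱ..ϑ, (1 / 2 - k * (x - θ)) * f x)
      = (1 / 2 + k * θ) * (J2 / Real.Gamma m) - k * Ω * (J3 / Real.Gamma (1 + m)) := by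
    have step : (∫ x in ϱ..ϑ, (1 / 2 - k * (x - θ)) * f x)
        = c ^ m / Real.Gamma m *
          ((1 / 2 + k * θ) * (∫ x in ϱ..ϑ, x ^ (m - 1) * Real.exp (-(c * x)))
            - k * ∫ x in ϱ..ϑ, x ^ ((1 + m) - 1) * Real.exp (-(c * x))) := by
      rw [← intervalIntegral.integral_const_mul, ← intervalIntegral.integral_const_mul,
          ← intervalIntegral.integral_sub (hint1.const_mul _) (hint2.const_mul _),
          ← intervalIntegral.integral_const_mul]
      refine intervalIntegral.integral_congr fun x hx => ?_
      have hx0 : 0 ≤ x := le_trans (le_min hϱ0 hϑ0) hx.1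
      have hxm : x ^ ((1 + m) - 1) = x ^ (m - 1) * x := by
        have h : (1 + m) - 1 = (m - 1) + 1 := by ring
        rw [h, Real.rpow_add_one' hx0 (by intro hh; exact hm.ne' (by linarith))]
      rw [hf' x, hxm]
      ring
    rw [step, gamma_integrand_subst (s := m) ϱ ϑ hc hϱ0 hϑ0,
        gamma_integrand_subst (s := 1 + m) ϱ ϑ hc hϱ0 hϑ0, ← hJ2, ← hJ3, hΓ']
    have h : c ^ m / Real.Gamma m *
          ((1 / 2 + k * θ) * (c ^ (-m) * J2) - k * (c ^ (-(1 + m)) * J3))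
        = (c ^ m * c ^ (-m)) * ((1 / 2 + k * θ) * (J2 / Real.Gamma m))
          - (c ^ m * c ^ (-(1 + m))) * (k * J3 / Real.Gamma m) := by ring
    rw [h, hA, hB]
    field_simp
  -- rewrite the arguments of the special functions
  have harg1 : m * ϱ / Ω = c * ϱ := by rw [hcc]; ring
  have harg2 : m * ϑ / Ω = c * ϑ := by rw [hcc]; ring
  rw [harg1, harg2, e1, e2]
  -- express the special function values via J1, J2, J3
  have hQ1 : regGammaQ m (c * ϱ) - regGammaQ m (c * ϑ) = J2 / Real.Gamma m :=
    regGammaQ_sub hm hcϱ hcab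
  have hQ2 : regGammaQ (1 + m) (c * ϑ) - regGammaQ (1 + m) (c * ϱ)
      = -(J3 / Real.Gamma (1 + m)) := by
    rw [← regGammaQ_sub hm1 hcϱ hcab]; ring
  have hP1 : regGammaP m (c * ϱ) = J1 / Real.Gamma m := rfl
  have hP2 : regGammaP m (c * ϑ) = (J1 + J2) / Real.Gamma m := by
    unfold regGammaP
    rw [intervalIntegral.integral_add_adjacent_intervals
      (gamma_integrand_ii' hm le_rfl hcϱ) (gamma_integrand_ii' hm hcϱ hcϑ)]
  rw [hQ1, hQ2, hP1, hP2, hΓ']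
  have hγ : Real.Gamma m ≠ 0 := hΓ.ne'
  field_simp
  ring
end

section
/- Let Ω > 0, μ > 0, θ ∈ ℝ, ϑ = θ + √(π/2)/μ and ϱ = θ − √(π/2)/μ, and assume ϱ ≥ 0. Let f(x) = (1/Ω)·exp(−x/Ω) be the exponential density with mean Ω (the Nakagami-m density with m = 1, i.e. Rayleigh fading of the envelope). Then ∫₀^ϱ f(x) dx + ∫_ϱ^ϑ (1/2 − (μ/√(2π))·(x − θ)) · f(x) dx = 1 + (μ·Ω/√(2π)) · ( exp(−ϑ/Ω) − exp(−ϱ/Ω) ). -/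
open MeasureTheory Real

/-! Both integrals are elementary: `-exp (-x / Ω)` is an antiderivative of the exponential
density, and `(c * (x - θ + Ω) - p) * exp (-x / Ω)` one of `(p - c * (x - θ))` times it.
Since `μ / √(2π) * (√(π/2) / μ) = 1/2`, the linear factor equals `1/2 ± 1/2` at the two ends
`ϑ, ϱ = θ ± √(π/2) / μ`, which collapses the boundary terms. -/

lemma hasDerivAt_exp_neg_div (Ω x : ℝ) :
    HasDerivAt (fun x => exp (-x / Ω)) (-(exp (-x / Ω) / Ω)) x :=
  (((hasDerivAt_neg x).div_const Ω).exp).congr_deriv (by ring)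

lemma integral_exp_density (Ω a b : ℝ) :
    ∫ x in a..b, 1 / Ω * exp (-x / Ω) = exp (-a / Ω) - exp (-b / Ω) := by
  have hderiv : ∀ x ∈ Set.uIcc a b,
      HasDerivAt (fun x => -exp (-x / Ω)) (1 / Ω * exp (-x / Ω)) x :=
    fun x _ => (hasDerivAt_exp_neg_div Ω x).neg.congr_deriv (by ring)
  rw [intervalIntegral.integral_eq_sub_of_hasDerivAt hderiv
    ((by fun_prop : Continuous _).intervalIntegrable _ _)]
  ring

lemma integral_affine_mul_exp_density {Ω : ℝ} (hΩ : Ω ≠ 0) (p c θ a b : ℝ) :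
    ∫ x in a..b, (p - c * (x - θ)) * (1 / Ω * exp (-x / Ω))
      = (c * (b - θ + Ω) - p) * exp (-b / Ω) - (c * (a - θ + Ω) - p) * exp (-a / Ω) := by
  have hderiv : ∀ x ∈ Set.uIcc a b,
      HasDerivAt (fun x => (c * (x - θ + Ω) - p) * exp (-x / Ω))
        ((p - c * (x - θ)) * (1 / Ω * exp (-x / Ω))) x := by
    intro x _
    have hlin : HasDerivAt (fun x => c * (x - θ + Ω) - p) c x := by
      simpa using (((hasDerivAt_id x).sub_const θ).add_const Ω).const_mul c |>.sub_const p
    refine (hlin.mul (hasDerivAt_exp_neg_div Ω x)).congr_deriv ?_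
    field_simp
    ring
  exact intervalIntegral.integral_eq_sub_of_hasDerivAt hderiv
    ((by fun_prop : Continuous _).intervalIntegrable _ _)

lemma sqrt_two_mul_pi : √(2 * π) = 2 * √(π / 2) := by
  rw [show 2 * π = 2 ^ 2 * (π / 2) by ring, sqrt_mul (by positivity), sqrt_sq zero_le_two]

lemma div_sqrt_two_mul_pi_mul_sqrt_pi_div_two {μ : ℝ} (hμ : μ ≠ 0) :
    μ / √(2 * π) * (√(π / 2) / μ) = 1 / 2 := by
  have : 0 < √(π / 2) := sqrt_pos.mpr (by positivity)
  rw [sqrt_two_mul_pi]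
  field_simp

theorem outage_rayleigh_closed_form_general
    (Ω μ θ ϑ ϱ : ℝ) (hΩ : 0 < Ω) (hμ : 0 < μ)
    (hϑ : ϑ = θ + Real.sqrt (π / 2) / μ) (hϱ : ϱ = θ - Real.sqrt (π / 2) / μ)
    (f : ℝ → ℝ) (hf : ∀ x, f x = 1 / Ω * Real.exp (-x / Ω)) :
    (∫ x in (0:ℝ)..ϱ, f x)
      + (∫ x in ϱ..ϑ, (1 / 2 - μ / Real.sqrt (2 * π) * (x - θ)) * f x)
    = 1 + μ * Ω / Real.sqrt (2 * π) * (Real.exp (-ϑ / Ω) - Real.exp (-ϱ / Ω)) := by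
  set c := μ / √(2 * π)
  have hhalf : c * (√(π / 2) / μ) = 1 / 2 := div_sqrt_two_mul_pi_mul_sqrt_pi_div_two hμ.ne'
  have hϑθ : c * (ϑ - θ) = 1 / 2 := by rw [hϑ, add_sub_cancel_left, hhalf]
  have hϱθ : c * (ϱ - θ) = -(1 / 2) := by rw [hϱ, sub_sub_cancel_left, mul_neg, hhalf]
  simp only [hf]
  rw [integral_exp_density, integral_affine_mul_exp_density hΩ.ne',
    mul_add c (ϑ - θ), mul_add c (ϱ - θ), hϑθ, hϱθ]
  simp only [neg_zero, zero_div, exp_zero]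
  ring

/-- Corollary to Proposition 1: for `m = 1` (Rayleigh fading of the envelope, exponential
instantaneous SNR) the closed-form outage probability reduces to the known Rayleigh form. -/
theorem outage_rayleigh_closed_form
    (Ω μ θ ϑ ϱ : ℝ) (hΩ : 0 < Ω) (hμ : 0 < μ)
    (hϑ : ϑ = θ + Real.sqrt (π / 2) / μ) (hϱ : ϱ = θ - Real.sqrt (π / 2) / μ)
    (hϱ0 : 0 ≤ ϱ)
    (f : ℝ → ℝ) (hf : ∀ x, f x = 1 / Ω * Real.exp (-x / Ω)) :
    (∫ x in (0:ℝ)..ϱ, f x)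
      + (∫ x in ϱ..ϑ, (1 / 2 - μ / Real.sqrt (2 * π) * (x - θ)) * f x)
    = 1 + μ * Ω / Real.sqrt (2 * π) * (Real.exp (-ϑ / Ω) - Real.exp (-ϱ / Ω)) :=
  outage_rayleigh_closed_form_general Ω μ θ ϑ ϱ hΩ hμ hϑ hϱ f hf
end

section
/- Let a > 0, b > 0 with a ≠ b, let μ > 0, θ ∈ ℝ, ϑ = θ + √(π/2)/μ and ϱ = θ − √(π/2)/μ, and assume ϱ ≥ 0. Let f_W(w) = ( e^(−w/a) − e^(−w/b) ) / (a − b) for w > 0. Then ∫₀^ϱ f_W(w) dw + ∫_ϱ^ϑ (1/2 − (μ/√(2π))·(w − θ)) · f_W(w) dw = 1 + (μ/(√(2π)·(a − b))) · ( a²·( e^(−ϑ/a) − e^(−ϱ/a) ) − b²·( e^(−ϑ/b) − e^(−ϱ/b) ) ). -/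
/-!
The density `f_W` is a difference of two exponentials, and `-c (A + B w + B c) e^{-w/c}` is
a primitive of `(A + B w) e^{-w/c}`, so both integrals are explicit boundary terms. The linear
ramp equals `1` at `ϱ` and `0` at `ϑ`, so the flat part's boundary term at `ϱ` cancels and what
is left is `1` from the flat part at `0` plus the `c²`-terms of the ramp.
-/

open MeasureTheory Real

lemma hasDerivAt_affine_mul_exp_neg_div {c : ℝ} (hc : c ≠ 0) (A B w : ℝ) :
    HasDerivAt (fun w => -c * (A + B * w + B * c) * exp (-w / c))
      ((A + B * w) * exp (-w / c)) w := by
  have hexp : HasDerivAt (fun w => exp (-w / c)) (-1 / c * exp (-w / c)) w := by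
    simpa [mul_comm] using ((hasDerivAt_id w).neg.div_const c).exp
  have haff : HasDerivAt (fun w => -c * (A + B * w + B * c)) (-c * B) w := by
    simpa using ((((hasDerivAt_id w).const_mul B).const_add A).add_const (B * c)).const_mul (-c)
  refine (haff.mul hexp).congr_deriv ?_
  field_simp
  ring

lemma integral_affine_mul_exp_neg_div {c : ℝ} (hc : c ≠ 0) (A B u v : ℝ) :
    ∫ w in u..v, (A + B * w) * exp (-w / c)
      = c * (A + B * u + B * c) * exp (-u / c) - c * (A + B * v + B * c) * exp (-v / c) := by
  rw [intervalIntegral.integral_eq_sub_of_hasDerivAt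
    (fun w _ => hasDerivAt_affine_mul_exp_neg_div hc A B w)
    (Continuous.intervalIntegrable (by fun_prop) _ _)]
  ring

lemma integral_affine_mul_hypoexponential_density {a b : ℝ} (ha : a ≠ 0) (hb : b ≠ 0)
    (A B u v : ℝ) :
    ∫ w in u..v, (A + B * w) * ((exp (-w / a) - exp (-w / b)) / (a - b))
      = (a * (A + B * u + B * a) * exp (-u / a) - a * (A + B * v + B * a) * exp (-v / a)
        - (b * (A + B * u + B * b) * exp (-u / b) - b * (A + B * v + B * b) * exp (-v / b)))
        / (a - b) := by
  simp only [mul_div_assoc', mul_sub]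
  rw [intervalIntegral.integral_div, intervalIntegral.integral_sub
    (Continuous.intervalIntegrable (by fun_prop) _ _)
    (Continuous.intervalIntegrable (by fun_prop) _ _),
    integral_affine_mul_exp_neg_div ha, integral_affine_mul_exp_neg_div hb]

theorem outage_MRC_rayleigh_closed_form_general
    (a b μ θ ϑ ϱ : ℝ) (ha : 0 < a) (hb : 0 < b) (hab : a ≠ b) (hμ : 0 < μ)
    (hϑ : ϑ = θ + Real.sqrt (π / 2) / μ) (hϱ : ϱ = θ - Real.sqrt (π / 2) / μ)
    (fW : ℝ → ℝ)
    (hfW : ∀ w, fW w = (Real.exp (-w / a) - Real.exp (-w / b)) / (a - b)) :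
    (∫ w in (0:ℝ)..ϱ, fW w)
      + (∫ w in ϱ..ϑ, (1 / 2 - μ / Real.sqrt (2 * π) * (w - θ)) * fW w)
    = 1 + μ / (Real.sqrt (2 * π) * (a - b)) *
        (a ^ 2 * (Real.exp (-ϑ / a) - Real.exp (-ϱ / a))
          - b ^ 2 * (Real.exp (-ϑ / b) - Real.exp (-ϱ / b))) := by
  set k := μ / sqrt (2 * π) with hk
  have hsqrt : sqrt (2 * π) = 2 * sqrt (π / 2) := by
    rw [show (2:ℝ) * π = 2 ^ 2 * (π / 2) by ring, sqrt_mul (by positivity), sqrt_sq zero_le_two]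
  have hhalf : sqrt (π / 2) / μ = 1 / (2 * k) := by
    rw [hk, hsqrt]
    field_simp
  have hflat : ∫ w in (0:ℝ)..ϱ, fW w
      = ∫ w in (0:ℝ)..ϱ, (1 + 0 * w) * ((exp (-w / a) - exp (-w / b)) / (a - b)) := by
    simp only [hfW, zero_mul, add_zero, one_mul]
  have hramp : ∫ w in ϱ..ϑ, (1 / 2 - k * (w - θ)) * fW w
      = ∫ w in ϱ..ϑ, (1 / 2 + k * θ + -k * w) * ((exp (-w / a) - exp (-w / b)) / (a - b)) := by
    congr 1 with w
    rw [hfW]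
    ring
  have hk0 : k ≠ 0 := by positivity
  have hab' : a - b ≠ 0 := sub_ne_zero.mpr hab
  rw [hflat, hramp, integral_affine_mul_hypoexponential_density ha.ne' hb.ne',
    integral_affine_mul_hypoexponential_density ha.ne' hb.ne', hϑ, hϱ, hhalf,
    ← div_div μ, ← hk]
  simp only [neg_zero, zero_div, exp_zero]
  field_simp
  ring

/-- Lemma 1: the closed-form outage probability after maximum ratio combining in the
Rayleigh (`m = 1`) case, obtained by integrating the linearized Q-function approximation
against the density of the sum of two independent exponential link SNRs. -/
theorem outage_MRC_rayleigh_closed_form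
    (a b μ θ ϑ ϱ : ℝ) (ha : 0 < a) (hb : 0 < b) (hab : a ≠ b) (hμ : 0 < μ)
    (hϑ : ϑ = θ + Real.sqrt (π / 2) / μ) (hϱ : ϱ = θ - Real.sqrt (π / 2) / μ)
    (hϱ0 : 0 ≤ ϱ)
    (fW : ℝ → ℝ)
    (hfW : ∀ w, fW w = (Real.exp (-w / a) - Real.exp (-w / b)) / (a - b)) :
    (∫ w in (0:ℝ)..ϱ, fW w)
      + (∫ w in ϱ..ϑ, (1 / 2 - μ / Real.sqrt (2 * π) * (w - θ)) * fW w)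
    = 1 + μ / (Real.sqrt (2 * π) * (a - b)) *
        (a ^ 2 * (Real.exp (-ϑ / a) - Real.exp (-ϱ / a))
          - b ^ 2 * (Real.exp (-ϑ / b) - Real.exp (-ϱ / b))) :=
  outage_MRC_rayleigh_closed_form_general a b μ θ ϑ ϱ ha hb hab hμ hϑ hϱ fW hfW
end
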